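/- arXiv:1302.3958 — 4 statements merged into one kernel-verified Lean document; each statement's English description precedes it below -/
import Mathlib

section
/- For the matrix A - λD with A = [[-dr/(Km), -d],[r(1-d/(Km)), 0]] and D = [[d11, -d12],[-d21, d22]], if K > d/m, det D > 0, all d_ij > 0, and d12 < (dr d22/(Km) + d d21)/(r(1 - d/(Km))), then det(A - λD) > 0 and tr(A - λD) < 0 for all λ ≥ 0. -/
/-!
As a function of `λ`, `det (A - λ D)` is a quadratic whose constant term `det A = d r (1 - d/(K m))`
is positive, whose leading coefficient `det D` is positive, and whose linear coefficient
`d r d₂₂/(K m) + d d₂₁ - r (1 - d/(K m)) d₁₂` is positive exactly by the bound on `d₁₂`; so it is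
positive for `λ ≥ 0`. The trace `-d r/(K m) - λ (d₁₁ + d₂₂)` is plainly negative.
-/

namespace Matrix

variable {R : Type*} [CommRing R]

theorem det_sub_smul_fin_two (M N : Matrix (Fin 2) (Fin 2) R) (t : R) :
    (M - t • N).det = M.det
      + t * (M 0 1 * N 1 0 + M 1 0 * N 0 1 - M 0 0 * N 1 1 - M 1 1 * N 0 0) + t ^ 2 * N.det := by
  simp only [det_fin_two, sub_apply, smul_apply, smul_eq_mul]
  ring

variable [LinearOrder R] [IsStrictOrderedRing R]

theorem det_pos_and_trace_neg_sub_smul_fin_two {M N : Matrix (Fin 2) (Fin 2) R}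
    (hM_det : 0 < M.det) (hM_trace : M.trace < 0) (hN_det : 0 ≤ N.det) (hN_trace : 0 ≤ N.trace)
    (hmix : M 0 0 * N 1 1 + M 1 1 * N 0 0 ≤ M 0 1 * N 1 0 + M 1 0 * N 0 1)
    {t : R} (ht : 0 ≤ t) :
    0 < (M - t • N).det ∧ (M - t • N).trace < 0 := by
  refine ⟨?_, ?_⟩
  · rw [det_sub_smul_fin_two]
    have hlin : 0 ≤ t * (M 0 1 * N 1 0 + M 1 0 * N 0 1 - M 0 0 * N 1 1 - M 1 1 * N 0 0) :=
      mul_nonneg ht (by linarith)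
    have hquad : 0 ≤ t ^ 2 * N.det := mul_nonneg (sq_nonneg t) hN_det
    linarith
  · rw [trace_sub, trace_smul, smul_eq_mul]
    linarith [mul_nonneg ht hN_trace]

end Matrix

theorem simple_market_diffusion_stable_general
    (r K m d d11 d12 d21 d22 : ℝ)
    (hr : 0 < r) (hm : 0 < m) (hd : 0 < d)
    (hd11 : 0 < d11) (hd22 : 0 < d22)
    (hKdm : K > d/m)
    (hdetD : 0 < Matrix.det (!![d11, -d12; -d21, d22] : Matrix (Fin 2) (Fin 2) ℝ))
    (hcrit : d12 < (d*r*d22/(K*m) + d*d21)/(r*(1 - d/(K*m)))) :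
    ∀ lam : ℝ, 0 ≤ lam →
      0 < Matrix.det ((!![-d*r/(K*m), -d; r*(1 - d/(K*m)), 0] : Matrix (Fin 2) (Fin 2) ℝ)
            - lam • (!![d11, -d12; -d21, d22] : Matrix (Fin 2) (Fin 2) ℝ)) ∧
      Matrix.trace ((!![-d*r/(K*m), -d; r*(1 - d/(K*m)), 0] : Matrix (Fin 2) (Fin 2) ℝ)
            - lam • (!![d11, -d12; -d21, d22] : Matrix (Fin 2) (Fin 2) ℝ)) < 0 := by
  intro lam hlam
  have hKm : d < K * m := (div_lt_iff₀ hm).1 hKdm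
  have hKm_pos : 0 < K * m := hd.trans hKm
  have hgrowth : 0 < r * (1 - d / (K * m)) :=
    mul_pos hr (sub_pos.2 ((div_lt_one hKm_pos).2 hKm))
  have hdamping : -d * r / (K * m) < 0 := by
    rw [neg_mul, neg_div, neg_neg_iff_pos]
    positivity
  have hcrit' := (lt_div_iff₀ hgrowth).1 hcrit
  apply Matrix.det_pos_and_trace_neg_sub_smul_fin_two _ _ hdetD.le _ _ hlam <;>
    simp only [Matrix.det_fin_two_of, Matrix.trace_fin_two_of, Matrix.of_apply,
      Matrix.cons_val', Matrix.cons_val_zero, Matrix.cons_val_one, Matrix.empty_val',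
      Matrix.cons_val_fin_one]
  · linarith [mul_pos hd hgrowth]
  · linarith
  · linarith
  · linear_combination hcrit'.le

theorem simple_market_diffusion_stable
    (r K m d d11 d12 d21 d22 : ℝ)
    (hr : 0 < r) (hK : 0 < K) (hm : 0 < m) (hd : 0 < d)
    (hd11 : 0 < d11) (hd12 : 0 < d12) (hd21 : 0 < d21) (hd22 : 0 < d22)
    (hKdm : K > d/m)
    (hdetD : 0 < Matrix.det (!![d11, -d12; -d21, d22] : Matrix (Fin 2) (Fin 2) ℝ))
    (hcrit : d12 < (d*r*d22/(K*m) + d*d21)/(r*(1 - d/(K*m)))) :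
    ∀ lam : ℝ, 0 ≤ lam →
      0 < Matrix.det ((!![-d*r/(K*m), -d; r*(1 - d/(K*m)), 0] : Matrix (Fin 2) (Fin 2) ℝ)
            - lam • (!![d11, -d12; -d21, d22] : Matrix (Fin 2) (Fin 2) ℝ)) ∧
      Matrix.trace ((!![-d*r/(K*m), -d; r*(1 - d/(K*m)), 0] : Matrix (Fin 2) (Fin 2) ℝ)
            - lam • (!![d11, -d12; -d21, d22] : Matrix (Fin 2) (Fin 2) ℝ)) < 0 :=
  simple_market_diffusion_stable_general r K m d d11 d12 d21 d22 hr hm hd hd11 hd22 hKdm hdetD hcrit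
end

section
/- For the matrix A_r = [[(m²-d²)/(ma) - r, -d²/m],[(d-m)²/(am), -d(m-d)/m]], if m > d, r > (m-d)/a, and a > 1, then tr(A_r) < 0; combined with det A_r > 0 this implies both eigenvalues of A_r have negative real part. -/
/-!
The trace of `A_r` splits as `(m - d - r a)/a - (a - 1) d (m - d)/(m a)`: the first summand is
negative since `r > (m - d)/a`, the second nonpositive since `a > 1` and `m > d > 0`. A root `z` of
`X² - t X + D` with `t < 0 < D` has `Re z < 0`: if it is real this is clear from the signs of
the coefficients, otherwise the imaginary part of the equation forces `2 Re z = t`.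
-/

open Polynomial

theorem Complex.re_neg_of_sq_sub_mul_add_eq_zero {t D : ℝ} (ht : t < 0) (hD : 0 < D) {z : ℂ}
    (hz : z ^ 2 - t * z + D = 0) : z.re < 0 := by
  have hre : z.re ^ 2 - z.im ^ 2 - t * z.re + D = 0 := by
    simpa [sq] using congrArg Complex.re hz
  have him : z.im * (2 * z.re - t) = 0 := by
    have := congrArg Complex.im hz
    simp only [sq, sub_im, add_im, mul_im, ofReal_re, ofReal_im, zero_im] at this
    linear_combination this
  rcases mul_eq_zero.mp him with hy | hx
  · -- a real root of a quadratic with positive coefficients is negative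
    nlinarith [sq_nonneg z.re]
  · linarith

theorem Matrix.re_neg_of_isRoot_charpoly_map_ofReal {A : Matrix (Fin 2) (Fin 2) ℝ}
    (htr : A.trace < 0) (hdet : 0 < A.det) {z : ℂ}
    (hz : (A.map Complex.ofReal).charpoly.IsRoot z) : z.re < 0 := by
  rw [show A.map Complex.ofReal = A.map (algebraMap ℝ ℂ) from rfl, Matrix.charpoly_map,
    IsRoot, eval_map_algebraMap, charpoly_fin_two] at hz
  simp only [map_add, aeval_sub, map_pow, aeval_X, map_mul, aeval_C,
    Complex.coe_algebraMap] at hz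
  exact Complex.re_neg_of_sq_sub_mul_add_eq_zero htr hdet hz

noncomputable def ratioJacobian (r m d a : ℝ) : Matrix (Fin 2) (Fin 2) ℝ :=
  !![(m^2-d^2)/(m*a) - r, -d^2/m; (d-m)^2/(a*m), -d*(m-d)/m]

theorem trace_ratioJacobian {r m d a : ℝ} (hm : m ≠ 0) (ha : a ≠ 0) :
    (ratioJacobian r m d a).trace = (m - d - r * a) / a - (a - 1) * d * (m - d) / (m * a) := by
  rw [ratioJacobian, Matrix.trace_fin_two_of]
  field_simp
  ring

theorem trace_ratioJacobian_neg {r m d a : ℝ} (hm : 0 < m) (hd : 0 ≤ d) (hmd : d < m)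
    (hrc : (m - d) / a < r) (ha1 : 1 < a) : (ratioJacobian r m d a).trace < 0 := by
  have ha : 0 < a := by linarith
  rw [trace_ratioJacobian hm.ne' ha.ne']
  have hra : m - d < r * a := (div_lt_iff₀ ha).mp hrc
  have h1 : (m - d - r * a) / a < 0 := div_neg_of_neg_of_pos (by linarith) ha
  have h2 : 0 ≤ (a - 1) * d * (m - d) / (m * a) := by
    apply div_nonneg _ (by positivity); apply mul_nonneg (by positivity); linarith
  linarith

theorem ratio_dependent_jacobian_stable_general
    (r m d a : ℝ) (hm : 0 < m) (hd : 0 < d)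
    (hmd : m > d) (hrc : r > (m-d)/a) (ha1 : a > 1) :
    Matrix.trace (!![(m^2-d^2)/(m*a) - r, -d^2/m;
                     (d-m)^2/(a*m), -d*(m-d)/m] : Matrix (Fin 2) (Fin 2) ℝ) < 0 ∧
    ((0 < Matrix.det (!![(m^2-d^2)/(m*a) - r, -d^2/m;
                         (d-m)^2/(a*m), -d*(m-d)/m] : Matrix (Fin 2) (Fin 2) ℝ)) →
      ∀ z : ℂ, ((!![(m^2-d^2)/(m*a) - r, -d^2/m;
                    (d-m)^2/(a*m), -d*(m-d)/m] : Matrix (Fin 2) (Fin 2) ℝ).map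
                  (Complex.ofReal)).charpoly.IsRoot z → z.re < 0) := by
  have htr : (ratioJacobian r m d a).trace < 0 := trace_ratioJacobian_neg hm hd.le hmd hrc ha1
  exact ⟨htr, fun hdet _ => Matrix.re_neg_of_isRoot_charpoly_map_ofReal htr hdet⟩

theorem ratio_dependent_jacobian_stable
    (r m d a : ℝ) (hr : 0 < r) (hm : 0 < m) (hd : 0 < d) (ha : 0 < a)
    (hmd : m > d) (hrc : r > (m-d)/a) (ha1 : a > 1) :
    Matrix.trace (!![(m^2-d^2)/(m*a) - r, -d^2/m;
                     (d-m)^2/(a*m), -d*(m-d)/m] : Matrix (Fin 2) (Fin 2) ℝ) < 0 ∧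
    ((0 < Matrix.det (!![(m^2-d^2)/(m*a) - r, -d^2/m;
                         (d-m)^2/(a*m), -d*(m-d)/m] : Matrix (Fin 2) (Fin 2) ℝ)) →
      ∀ z : ℂ, ((!![(m^2-d^2)/(m*a) - r, -d^2/m;
                    (d-m)^2/(a*m), -d*(m-d)/m] : Matrix (Fin 2) (Fin 2) ℝ).map
                  (Complex.ofReal)).charpoly.IsRoot z → z.re < 0) :=
  ratio_dependent_jacobian_stable_general r m d a hm hd hmd hrc ha1
end

section
/- Let A = [a_ij] be a 2×2 real matrix with det A > 0, a11 < 0, a12 < 0, a21 > 0, a22 < 0, and let δ₁, δ₂, ρ₁, ρ₂, ū, v̄ > 0, ρ₁', ρ₂' < 0. If ρ₁'ū ρ₂'v̄ < ρ₁ρ₂ and -1/v̄ < ρ₁'/ρ₁, then det B > 0 for B = [[a11 - 2δ₁ρ₁, a12 - 2δ₁ρ₁'ū],[a21 - 2δ₂ρ₂'v̄, a22 - 2δ₂ρ₂]]. -/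
/-!
Expanding, det B = det A - 2(δ₁(ρ₁a₂₂ - ρ₁'ūa₂₁) + δ₂(ρ₂a₁₁ - ρ₂'v̄a₁₂)) + 4δ₁δ₂(ρ₁ρ₂ - ρ₁'ūρ₂'v̄).
The first and last terms are positive by hypothesis, and both brackets in the middle term are
negative: the first is the cleared-denominator form of a₂₂/a₂₁ < ρ₁'ū/ρ₁, the second is a sum
of two negative products.
-/

theorem det_fin_two_sub_two_mul (a11 a12 a21 a22 δ1 δ2 ρ1 ρ2 ρ1' ρ2' ub vb : ℝ) :
    Matrix.det (!![a11 - 2*δ1*ρ1, a12 - 2*δ1*ρ1'*ub;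
                   a21 - 2*δ2*ρ2'*vb, a22 - 2*δ2*ρ2] : Matrix (Fin 2) (Fin 2) ℝ) =
      (a11*a22 - a12*a21)
        - 2 * (δ1 * (ρ1*a22 - ρ1'*ub*a21) + δ2 * (ρ2*a11 - ρ2'*vb*a12))
        + 4 * (δ1 * δ2) * (ρ1*ρ2 - ρ1'*ub*(ρ2'*vb)) := by
  rw [Matrix.det_fin_two_of]
  ring

theorem patch_matrix_det_positive_general
    (a11 a12 a21 a22 δ1 δ2 ρ1 ρ2 ρ1' ρ2' ub vb : ℝ)
    (hdetA : 0 < a11*a22 - a12*a21)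
    (h11 : a11 < 0) (h12 : a12 < 0) (h21 : 0 < a21)
    (hδ1 : 0 < δ1) (hδ2 : 0 < δ2) (hρ1 : 0 < ρ1) (hρ2 : 0 < ρ2)
    (hvb : 0 < vb) (hρ2' : ρ2' < 0)
    (hprod : ρ1'*ub*(ρ2'*vb) < ρ1*ρ2)
    (hentry : a22/a21 < ρ1'*ub/ρ1) :
    0 < Matrix.det (!![a11 - 2*δ1*ρ1, a12 - 2*δ1*ρ1'*ub;
                       a21 - 2*δ2*ρ2'*vb, a22 - 2*δ2*ρ2] : Matrix (Fin 2) (Fin 2) ℝ) := by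
  rw [det_fin_two_sub_two_mul]
  have hrow1 : ρ1*a22 - ρ1'*ub*a21 < 0 := by
    rw [div_lt_div_iff₀ h21 hρ1] at hentry
    linarith
  have hrow2 : ρ2*a11 - ρ2'*vb*a12 < 0 := by
    have := mul_neg_of_pos_of_neg hρ2 h11
    have := mul_pos_of_neg_of_neg (mul_neg_of_neg_of_pos hρ2' hvb) h12
    linarith
  have hcross := mul_pos (mul_pos hδ1 hδ2) (sub_pos.mpr hprod)
  have hmixed := add_neg (mul_neg_of_pos_of_neg hδ1 hrow1) (mul_neg_of_pos_of_neg hδ2 hrow2)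
  linarith

theorem patch_matrix_det_positive
    (a11 a12 a21 a22 δ1 δ2 ρ1 ρ2 ρ1' ρ2' ub vb : ℝ)
    (hdetA : 0 < a11*a22 - a12*a21)
    (h11 : a11 < 0) (h12 : a12 < 0) (h21 : 0 < a21) (h22 : a22 < 0)
    (hδ1 : 0 < δ1) (hδ2 : 0 < δ2) (hρ1 : 0 < ρ1) (hρ2 : 0 < ρ2)
    (hub : 0 < ub) (hvb : 0 < vb) (hρ1' : ρ1' < 0) (hρ2' : ρ2' < 0)
    (hprod : ρ1'*ub*(ρ2'*vb) < ρ1*ρ2)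
    (hineq : -1/vb < ρ1'/ρ1)
    (hentry : a22/a21 < ρ1'*ub/ρ1) :
    0 < Matrix.det (!![a11 - 2*δ1*ρ1, a12 - 2*δ1*ρ1'*ub;
                       a21 - 2*δ2*ρ2'*vb, a22 - 2*δ2*ρ2] : Matrix (Fin 2) (Fin 2) ℝ) :=
  patch_matrix_det_positive_general a11 a12 a21 a22 δ1 δ2 ρ1 ρ2 ρ1' ρ2' ub vb hdetA h11 h12 h21 hδ1
    hδ2 hρ1 hρ2 hvb hρ2' hprod hentry
end

section
/- For ρ₁(v) = (α+v)/(1+v), ρ₂(u) = (β+u)/(1+u) with α, β > 1 and ū, v̄ > 0, the product condition ρ₁'(v̄)ū · ρ₂'(ū)v̄ < ρ₁(v̄)ρ₂(ū) holds. -/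
/-!
Write `ρ₁'(v̄) ū · ρ₂'(ū) v̄ = (α - 1) ū · (β - 1) v̄ / ((1 + v̄)² (1 + ū)²)` and
`ρ₁(v̄) ρ₂(ū) = (α + v̄)(1 + ū) · (β + ū)(1 + v̄) / ((1 + v̄)² (1 + ū)²)`.
The numerators compare factor by factor: `(α - 1) ū < (α + v̄)(1 + ū)` and
`(β - 1) v̄ < (β + ū)(1 + v̄)`.
-/

lemma hasDerivAt_add_div_one_add (a : ℝ) {x : ℝ} (hx : 1 + x ≠ 0) :
    HasDerivAt (fun v : ℝ => (a + v) / (1 + v)) ((1 - a) / (1 + x) ^ 2) x := by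
  refine (((hasDerivAt_id x).const_add a).div ((hasDerivAt_id x).const_add 1) hx).congr_deriv ?_
  simp only [id_eq]
  field_simp
  ring

lemma deriv_add_div_one_add (a : ℝ) {x : ℝ} (hx : 1 + x ≠ 0) :
    deriv (fun v : ℝ => (a + v) / (1 + v)) x = (1 - a) / (1 + x) ^ 2 :=
  (hasDerivAt_add_div_one_add a hx).deriv

lemma sub_one_mul_lt_add_mul_one_add {a u v : ℝ} (ha : 0 < a) (hu : 0 ≤ u) (hv : 0 ≤ v) :
    (a - 1) * u < (a + v) * (1 + u) := by
  nlinarith [mul_nonneg hu hv]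

theorem example_migration_product_condition
    (α β ub vb : ℝ) (hα : 1 < α) (hβ : 1 < β) (hub : 0 < ub) (hvb : 0 < vb) :
    deriv (fun v : ℝ => (α + v)/(1 + v)) vb * ub
      * (deriv (fun u : ℝ => (β + u)/(1 + u)) ub * vb)
      < (fun v : ℝ => (α + v)/(1 + v)) vb * (fun u : ℝ => (β + u)/(1 + u)) ub := by
  have hv : 1 + vb ≠ 0 := by positivity
  have hu : 1 + ub ≠ 0 := by positivity
  rw [deriv_add_div_one_add α hv, deriv_add_div_one_add β hu]
  have hαu : 0 ≤ (α - 1) * ub := mul_nonneg (sub_nonneg.2 hα.le) hub.le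
  have hβv : 0 ≤ (β - 1) * vb := mul_nonneg (sub_nonneg.2 hβ.le) hvb.le
  calc (1 - α) / (1 + vb) ^ 2 * ub * ((1 - β) / (1 + ub) ^ 2 * vb)
      = (α - 1) * ub * ((β - 1) * vb) / ((1 + vb) ^ 2 * (1 + ub) ^ 2) := by
        field_simp; ring
    _ < (α + vb) * (1 + ub) * ((β + ub) * (1 + vb)) / ((1 + vb) ^ 2 * (1 + ub) ^ 2) := by
        gcongr ?_ / _
        exact mul_lt_mul'' (sub_one_mul_lt_add_mul_one_add (by linarith) hub.le hvb.le)
          (sub_one_mul_lt_add_mul_one_add (by linarith) hvb.le hub.le) hαu hβv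
    _ = (α + vb) / (1 + vb) * ((β + ub) / (1 + ub)) := by
        field_simp
end
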